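/- arXiv:2602.15686 — 2 statements merged into one kernel-verified Lean document; each statement's English description precedes it below -/
import Mathlib

section
/- Let X1, X2 be i.i.d. uniform on [0,1], L = min(X1,X2), R = max(X1,X2). Define P = Π_{[L,R]}(1/2), the projection of 1/2 onto [L,R] (i.e., P = R if R < 1/2, P = 1/2 if L ≤ 1/2 ≤ R, and P = L if L > 1/2). Then Var(P) = 1/48 and P = 1/2 with probability 1/2. -/
/-!
For fixed `x ≤ 1/2` the slice `y ↦ P(x, y)` is the projection of `y` onto `[x, 1/2]`, and for
`x ≥ 1/2` the projection onto `[1/2, x]`. So by Fubini every moment `E g(P)` is an integral of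
explicit piecewise expressions in `x`; for `g = id` and `g = (·)²` these are polynomials, giving
`E P = 1/2` and `E P² = 13/48`. Moreover `P ≠ 1/2` exactly when both points lie on the same side
of `1/2`, an event of probability `1/4 + 1/4`.
-/

open MeasureTheory

/-- The uniform product measure on `[0,1]²`. -/
noncomputable def unifSq : Measure (ℝ × ℝ) :=
  (volume.restrict (Set.Icc (0:ℝ) 1)).prod (volume.restrict (Set.Icc (0:ℝ) 1))

/-- Projection of `x` onto the interval `[L,R]`. -/
noncomputable def proj (L R x : ℝ) : ℝ := min (max x L) R

/-- Projection of `1/2` onto `[min q.1 q.2, max q.1 q.2]`. -/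
noncomputable def anchorHalf (q : ℝ × ℝ) : ℝ :=
  proj (min q.1 q.2) (max q.1 q.2) (1/2)

open Set ProbabilityTheory

lemma continuous_proj (L R : ℝ) : Continuous (proj L R) := by
  unfold proj; fun_prop

lemma proj_eq_self_iff {L R x : ℝ} (h : L ≤ R) : proj L R x = x ↔ x ∈ Icc L R := by
  simp only [proj, mem_Icc]
  grind

lemma proj_min_max_of_le {x c : ℝ} (h : x ≤ c) (y : ℝ) :
    proj (min x y) (max x y) c = proj x c y := by
  simp only [proj]
  grind

lemma proj_min_max_of_ge {x c : ℝ} (h : c ≤ x) (y : ℝ) :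
    proj (min x y) (max x y) c = proj c x y := by
  simp only [proj]
  grind

lemma integral_comp_proj {g : ℝ → ℝ} (hg : Continuous g) {a b c d : ℝ}
    (hca : c ≤ a) (hab : a ≤ b) (hbd : b ≤ d) :
    ∫ y in c..d, g (proj a b y) = (a - c) * g a + (∫ y in a..b, g y) + (d - b) * g b := by
  have hi : ∀ u v, IntervalIntegrable (fun y => g (proj a b y)) volume u v := fun u v =>
    (hg.comp (continuous_proj a b)).intervalIntegrable u v
  have h₁ : EqOn (fun y => g (proj a b y)) (fun _ => g a) (uIcc c a) := by
    intro y hy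
    rw [uIcc_of_le hca] at hy
    simp [proj, hy.2, hab]
  have h₂ : EqOn (fun y => g (proj a b y)) g (uIcc a b) := by
    intro y hy
    rw [uIcc_of_le hab] at hy
    simp [proj, hy.1, hy.2]
  have h₃ : EqOn (fun y => g (proj a b y)) (fun _ => g b) (uIcc b d) := by
    intro y hy
    rw [uIcc_of_le hbd] at hy
    simp [proj, hab.trans hy.1, hy.1]
  rw [← intervalIntegral.integral_add_adjacent_intervals (hi c a) (hi a d),
    ← intervalIntegral.integral_add_adjacent_intervals (hi a b) (hi b d),
    intervalIntegral.integral_congr h₁, intervalIntegral.integral_congr h₂,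
    intervalIntegral.integral_congr h₃]
  simp only [intervalIntegral.integral_const, smul_eq_mul]
  ring

instance : IsProbabilityMeasure (volume.restrict (Icc (0:ℝ) 1)) :=
  ⟨by simp⟩

instance : IsProbabilityMeasure unifSq := by
  unfold unifSq; infer_instance

lemma restrict_Icc_zero_one_Iio {a : ℝ} (ha : a ≤ 1) :
    volume.restrict (Icc (0:ℝ) 1) (Iio a) = ENNReal.ofReal a := by
  have : Iio a ∩ Icc 0 1 = Ico 0 a := by
    ext; simp only [mem_inter_iff, mem_Iio, mem_Icc, mem_Ico]; grind
  rw [Measure.restrict_apply measurableSet_Iio, this]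
  simp

lemma restrict_Icc_zero_one_Ioi {a : ℝ} (ha : 0 ≤ a) :
    volume.restrict (Icc (0:ℝ) 1) (Ioi a) = ENNReal.ofReal (1 - a) := by
  have : Ioi a ∩ Icc 0 1 = Ioc a 1 := by
    ext; simp only [mem_inter_iff, mem_Ioi, mem_Icc, mem_Ioc]; grind
  rw [Measure.restrict_apply measurableSet_Ioi, this]
  simp

lemma unifSq_eq_restrict : unifSq = volume.restrict (Icc (0:ℝ) 1 ×ˢ Icc (0:ℝ) 1) := by
  rw [unifSq, Measure.prod_restrict, ← Measure.volume_eq_prod]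

lemma Continuous.integrable_unifSq {f : ℝ × ℝ → ℝ} (hf : Continuous f) :
    Integrable f unifSq := by
  rw [unifSq_eq_restrict]
  exact hf.continuousOn.integrableOn_compact (isCompact_Icc.prod isCompact_Icc)

lemma integral_unifSq {f : ℝ × ℝ → ℝ} (hf : Integrable f unifSq) :
    ∫ q, f q ∂unifSq = ∫ x in (0:ℝ)..1, ∫ y in (0:ℝ)..1, f (x, y) := by
  simp only [intervalIntegral.integral_of_le zero_le_one, ← integral_Icc_eq_integral_Ioc]
  exact integral_prod f hf

lemma continuous_anchorHalf : Continuous anchorHalf := by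
  unfold anchorHalf proj; fun_prop

lemma integral_comp_anchorHalf {g : ℝ → ℝ} (hg : Continuous g) :
    ∫ q, g (anchorHalf q) ∂unifSq =
      (∫ x in (0:ℝ)..1/2, x * g x + (∫ y in x..1/2, g y) + g (1/2) / 2) +
      ∫ x in (1/2:ℝ)..1, g (1/2) / 2 + (∫ y in 1/2..x, g y) + (1 - x) * g x := by
  have hc : Continuous fun x => ∫ y in (0:ℝ)..1, g (anchorHalf (x, y)) :=
    intervalIntegral.continuous_parametric_intervalIntegral_of_continuous'
      (f := fun x y => g (anchorHalf (x, y))) (hg.comp continuous_anchorHalf) 0 1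
  have h₁ : EqOn (fun x => ∫ y in (0:ℝ)..1, g (anchorHalf (x, y)))
      (fun x => x * g x + (∫ y in x..1/2, g y) + g (1/2) / 2) (uIcc 0 (1/2)) := by
    intro x hx
    rw [uIcc_of_le (by norm_num)] at hx
    simp only [anchorHalf, proj_min_max_of_le hx.2]
    rw [integral_comp_proj hg hx.1 hx.2 (by norm_num)]
    ring
  have h₂ : EqOn (fun x => ∫ y in (0:ℝ)..1, g (anchorHalf (x, y)))
      (fun x => g (1/2) / 2 + (∫ y in 1/2..x, g y) + (1 - x) * g x) (uIcc (1/2) 1) := by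
    intro x hx
    rw [uIcc_of_le (by norm_num)] at hx
    simp only [anchorHalf, proj_min_max_of_ge hx.1]
    rw [integral_comp_proj hg (by norm_num) hx.1 hx.2]
    ring
  rw [integral_unifSq (f := fun q => g (anchorHalf q))
      (hg.comp continuous_anchorHalf).integrable_unifSq,
    ← intervalIntegral.integral_add_adjacent_intervals (hc.intervalIntegrable 0 (1/2))
      (hc.intervalIntegrable _ _),
    intervalIntegral.integral_congr h₁, intervalIntegral.integral_congr h₂]

lemma integral_anchorHalf : ∫ q, anchorHalf q ∂unifSq = 1/2 := by
  have h := integral_comp_anchorHalf continuous_id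
  simp only [id] at h
  rw [h]
  simp (disch := exact (Continuous.intervalIntegrable (by fun_prop) _ _)) only [integral_id,
    ← sq, sub_mul, one_mul, intervalIntegral.integral_add, intervalIntegral.integral_sub,
    intervalIntegral.integral_div, integral_pow, intervalIntegral.integral_const, smul_eq_mul]
  norm_num

lemma integral_anchorHalf_sq : ∫ q, anchorHalf q ^ 2 ∂unifSq = 13/48 := by
  rw [integral_comp_anchorHalf (continuous_pow 2)]
  simp (disch := exact (Continuous.intervalIntegrable (by fun_prop) _ _)) only [integral_pow,
    ← pow_succ', sub_mul, one_mul, intervalIntegral.integral_add, intervalIntegral.integral_sub,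
    intervalIntegral.integral_div, intervalIntegral.integral_const, smul_eq_mul]
  norm_num

lemma variance_anchorHalf : variance anchorHalf unifSq = 1/48 := by
  have hL2 : MemLp anchorHalf 2 unifSq :=
    (memLp_two_iff_integrable_sq continuous_anchorHalf.aestronglyMeasurable).2
      (continuous_anchorHalf.pow 2).integrable_unifSq
  rw [variance_eq_sub hL2]
  simp only [Pi.pow_apply]
  rw [integral_anchorHalf_sq, integral_anchorHalf]
  norm_num

lemma compl_setOf_anchorHalf_eq_half : {q : ℝ × ℝ | anchorHalf q = 1/2}ᶜ =
    Ioi (1/2) ×ˢ Ioi (1/2) ∪ Iio (1/2) ×ˢ Iio (1/2) := by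
  ext ⟨x, y⟩
  simp only [anchorHalf, proj_eq_self_iff min_le_max, mem_compl_iff, mem_ofPred_eq, mem_Icc,
    mem_union, mem_prod, mem_Ioi, mem_Iio]
  grind

lemma unifSq_setOf_anchorHalf_eq_half : unifSq {q : ℝ × ℝ | anchorHalf q = 1/2} = 1/2 := by
  have hS : MeasurableSet {q : ℝ × ℝ | anchorHalf q = 1/2} :=
    measurableSet_eq_fun continuous_anchorHalf.measurable measurable_const
  have hdisj : Disjoint (Ioi (1/2 : ℝ) ×ˢ Ioi (1/2 : ℝ)) (Iio (1/2) ×ˢ Iio (1/2)) :=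
    Ioi_disjoint_Iio_same.set_prod_left _ _
  have half : ENNReal.ofReal (1/2) = 2⁻¹ := by
    rw [one_div, ENNReal.ofReal_inv_of_pos two_pos, ENNReal.ofReal_ofNat]
  have hcompl :
      unifSq {q : ℝ × ℝ | anchorHalf q = 1/2}ᶜ = 2⁻¹ * 2⁻¹ + 2⁻¹ * 2⁻¹ := by
    rw [compl_setOf_anchorHalf_eq_half,
      measure_union hdisj (measurableSet_Iio.prod measurableSet_Iio), unifSq,
      Measure.prod_prod, Measure.prod_prod, restrict_Icc_zero_one_Iio (by norm_num),
      restrict_Icc_zero_one_Ioi (by norm_num), show (1:ℝ) - 1/2 = 1/2 by norm_num, half]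
  rw [← compl_compl {q : ℝ × ℝ | anchorHalf q = 1/2}, prob_compl_eq_one_sub hS.compl, hcompl,
    ← mul_add, ENNReal.inv_two_add_inv_two, mul_one, ENNReal.one_sub_inv_two, one_div]

theorem stmt_1 :
    ProbabilityTheory.variance anchorHalf unifSq = 1/48 ∧
    unifSq {q : ℝ × ℝ | anchorHalf q = 1/2} = 1/2 :=
  ⟨variance_anchorHalf, unifSq_setOf_anchorHalf_eq_half⟩
end

section
/- Suppose costs and valuations are uniform on [0,1] and the reference price is R = 1/2. A buyer with valuation v facing a truthful seller (ask = cost) obtains monopsony utility max_{b} (v−b)·b = v²/4 (achieved at b = v/2) when bidding below R, and price-taking utility U(v) = (v − 1/2)·(1/2) + ∫_{1/2}^{v} (v − c) dc = (v² − 1/4)/2 when bidding truthfully above R (for v ≥ 1/2). These are equal at exactly one point v̂ = √2/2 in (1/2, 1], with monopsony strictly better below v̂ and price-taking strictly better above. -/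
open Real Set

theorem stmt_16 :
    (∀ v b : ℝ, (v - b) * b ≤ v^2 / 4) ∧
    (∀ v : ℝ, (v - v/2) * (v/2) = v^2 / 4) ∧
    (∀ v : ℝ, 1/2 ≤ v →
      (v - 1/2) * (1/2) + (∫ c in (1/2:ℝ)..v, (v - c)) = (v^2 - 1/4) / 2) ∧
    (∀ v ∈ Ioc (1/2:ℝ) 1, (v^2 / 4 = (v^2 - 1/4) / 2 ↔ v = Real.sqrt 2 / 2)) ∧
    (∀ v ∈ Ioc (1/2:ℝ) 1, v < Real.sqrt 2 / 2 → (v^2 - 1/4) / 2 < v^2 / 4) ∧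
    (∀ v ∈ Ioc (1/2:ℝ) 1, Real.sqrt 2 / 2 < v → v^2 / 4 < (v^2 - 1/4) / 2) := by
  have hs : Real.sqrt 2 ^ 2 = 2 := Real.sq_sqrt (by norm_num)
  have hsp : (0:ℝ) < Real.sqrt 2 := Real.sqrt_pos.2 (by norm_num)
  refine ⟨fun v b => by nlinarith [sq_nonneg (v - 2*b)], fun v => by ring, ?_, ?_, ?_, ?_⟩
  · intro v hv
    have : (∫ c in (1/2:ℝ)..v, (v - c)) = v * (v - 1/2) - (v^2/2 - (1/2)^2/2) := by
      have h1 : (∫ c in (1/2:ℝ)..v, (v - c)) =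
          (∫ _ in (1/2:ℝ)..v, v) - ∫ c in (1/2:ℝ)..v, c :=
        intervalIntegral.integral_sub intervalIntegrable_const intervalIntegral.intervalIntegrable_id
      rw [h1, intervalIntegral.integral_const, integral_id, smul_eq_mul]
      ring
    rw [this]; ring
  · rintro v ⟨hv1, hv2⟩
    constructor
    · intro h
      have hsq : v^2 = 1/2 := by linarith
      have hfac : (v - Real.sqrt 2 / 2) * (v + Real.sqrt 2 / 2) = 0 := by nlinarith
      rcases mul_eq_zero.1 hfac with h' | h'
      · linarith
      · nlinarith
    · intro h; rw [h]; nlinarith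
  · rintro v ⟨hv1, hv2⟩ h
    nlinarith [mul_pos (sub_pos.2 h) (by nlinarith : (0:ℝ) < v + Real.sqrt 2 / 2)]
  · rintro v ⟨hv1, hv2⟩ h
    nlinarith [mul_pos (sub_pos.2 h) (by nlinarith : (0:ℝ) < v + Real.sqrt 2 / 2)]
end
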